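/- Let p ≥ 1 and let T_p be the triangle-path graph. Then: (i) every vertex cover of T_p has at least 2p vertices; (ii) every vertex cover of T_p containing all of a_1,…,a_p has at least 2p + 1 vertices; (iii) for every s* ∈ {1,…,p}, the set {a_s : 1 ≤ s ≤ p, s ≠ s*} ∪ {b_{2s} : 1 ≤ s ≤ s*} ∪ {b_{2s+1} : s* ≤ s ≤ p} is a vertex cover of T_p of size exactly 2p. -/

import Mathlib

/-- Vertex set of the triangle-path graph `T_p`: the `a`-vertices `a_1, …, a_p`
(0-indexed: `Sum.inl s` is `a_{s+1}`) and the `b`-vertices `b_1, …, b_{2p+2}`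
(0-indexed: `Sum.inr i` is `b_{i+1}`). -/
abbrev TPV (p : ℕ) : Type := Fin p ⊕ Fin (2 * p + 2)

/-- The edges of `T_p` (as a relation, to be symmetrized): `{b_i, b_{i+1}}` for
`1 ≤ i ≤ 2p+1`, and `{a_s, b_{2s}}`, `{a_s, b_{2s+1}}` for `1 ≤ s ≤ p` (0-indexed:
`a_{s0}`—`b_j` for `j = 2 s0 + 1` or `j = 2 s0 + 2`). -/
def TPRel (p : ℕ) : TPV p → TPV p → Prop
  | Sum.inr i, Sum.inr j => (j : ℕ) = (i : ℕ) + 1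
  | Sum.inl s, Sum.inr j => (j : ℕ) = 2 * (s : ℕ) + 1 ∨ (j : ℕ) = 2 * (s : ℕ) + 2
  | _, _ => False

/-- The triangle-path graph `T_p`. -/
def trianglePath (p : ℕ) : SimpleGraph (TPV p) := SimpleGraph.fromRel (TPRel p)

/-- A vertex cover: a set of vertices containing at least one endpoint of every edge. -/
def IsVertexCover {α : Type*} (G : SimpleGraph α) (C : Set α) : Prop :=
  ∀ ⦃x y : α⦄, G.Adj x y → x ∈ C ∨ y ∈ C

/-- For `s* ∈ [p]` (0-indexed as `t`), the set
`{a_s : s ≠ s*} ∪ {b_{2s} : 1 ≤ s ≤ s*} ∪ {b_{2s+1} : s* ≤ s ≤ p}` (in 0-indexed terms: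
the odd `b`-indices `≤ 2t+1` and the even `b`-indices in `[2t+2, 2p]`). -/
def tpCover (p : ℕ) (t : Fin p) : Set (TPV p) :=
  fun x => Sum.elim (fun s => s ≠ t)
    (fun j => ((j : ℕ) % 2 = 1 ∧ (j : ℕ) ≤ 2 * (t : ℕ) + 1) ∨
      ((j : ℕ) % 2 = 0 ∧ 2 * (t : ℕ) + 2 ≤ (j : ℕ) ∧ (j : ℕ) ≤ 2 * p)) x

/-! A vertex cover misses at most one vertex of every clique. `T_p` contains `p` disjoint
triangles `{a_s, b_{2s}, b_{2s+1}}`, so a cover has at least `2p` vertices; and the path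
`b_1 ⋯ b_{2p+2}` has the perfect matching `{b_{2k-1}, b_{2k}}`, `1 ≤ k ≤ p+1`, disjoint from the
`a`-vertices, so a cover containing every `a_s` has at least `p + (p+1)` vertices. The cover
`tpCover p s*` takes `a_s` for `s ≠ s*` and exactly one vertex from each matching edge. -/

open Finset

section VertexCover

variable {α : Type*} {G : SimpleGraph α}

lemma isVertexCover_fromRel {r : α → α → Prop} {C : Set α}
    (h : ∀ x y, r x y → x ∈ C ∨ y ∈ C) : IsVertexCover (SimpleGraph.fromRel r) C := by
  intro x y hxy
  rcases (SimpleGraph.fromRel_adj r x y).1 hxy with ⟨-, hr | hr⟩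
  · exact h x y hr
  · exact (h y x hr).symm

variable [DecidableEq α]

lemma IsVertexCover.card_le_card_inter_add_one {C K : Finset α} (hC : IsVertexCover G C)
    (hK : G.IsClique (K : Set α)) : #K ≤ #(K ∩ C) + 1 := by
  have hmissed : #(K.filter (· ∉ C)) ≤ 1 := by
    refine card_le_one.2 fun x hx y hy => ?_
    rw [mem_filter] at hx hy
    by_contra hxy
    rcases hC (hK hx.1 hy.1 hxy) with h | h
    exacts [hx.2 h, hy.2 h]
  rw [← card_filter_add_card_filter_not (· ∈ C), filter_mem_eq_inter]
  omega

lemma card_add_sum_card_inter_le {ι : Type*} {A C : Finset α} {I : Finset ι}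
    {K : ι → Finset α} (hAC : A ⊆ C) (hK : (I : Set ι).PairwiseDisjoint K)
    (hAK : ∀ i ∈ I, Disjoint A (K i)) : #A + ∑ i ∈ I, #(K i ∩ C) ≤ #C := by
  have hKC : (I : Set ι).PairwiseDisjoint fun i => K i ∩ C :=
    hK.mono fun i => inter_subset_left
  have hA : Disjoint A (I.biUnion fun i => K i ∩ C) :=
    (disjoint_biUnion_right _ _ _).2 fun i hi => (hAK i hi).mono_right inter_subset_left
  rw [← card_biUnion hKC, ← card_union_of_disjoint hA]
  exact card_le_card (union_subset hAC (biUnion_subset.2 fun i _ => inter_subset_right))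

lemma IsVertexCover.card_add_sum_le_card {ι : Type*} {A C : Finset α} {I : Finset ι}
    {K : ι → Finset α} (hC : IsVertexCover G C) (hAC : A ⊆ C)
    (hKcl : ∀ i ∈ I, G.IsClique (K i : Set α)) (hK : (I : Set ι).PairwiseDisjoint K)
    (hAK : ∀ i ∈ I, Disjoint A (K i)) : #A + ∑ i ∈ I, (#(K i) - 1) ≤ #C := by
  refine le_trans (Nat.add_le_add_left (sum_le_sum fun i hi => ?_) _)
    (card_add_sum_card_inter_le hAC hK hAK)
  have := hC.card_le_card_inter_add_one (hKcl i hi)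
  omega

end VertexCover

namespace TrianglePath

variable {p : ℕ}

lemma adj_inr_inr {i j : Fin (2 * p + 2)} (h : (j : ℕ) = i + 1) :
    (trianglePath p).Adj (Sum.inr i) (Sum.inr j) :=
  (SimpleGraph.fromRel_adj _ _ _).2 ⟨by rw [Ne, Sum.inr.injEq, Fin.ext_iff]; omega, Or.inl h⟩

lemma adj_inl_inr {s : Fin p} {j : Fin (2 * p + 2)}
    (h : (j : ℕ) = 2 * s + 1 ∨ (j : ℕ) = 2 * s + 2) :
    (trianglePath p).Adj (Sum.inl s) (Sum.inr j) :=
  (SimpleGraph.fromRel_adj _ _ _).2 ⟨Sum.inl_ne_inr, Or.inl h⟩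

/-- The triangle `{a_{s+1}, b_{2s+2}, b_{2s+3}}` (1-indexed names). -/
def triangle (s : Fin p) : Finset (TPV p) :=
  {Sum.inl s, Sum.inr ⟨2 * s + 1, by omega⟩, Sum.inr ⟨2 * s + 2, by omega⟩}

/-- The matching edge `{b_{2k+1}, b_{2k+2}}` (1-indexed names) of the path on the `b`'s. -/
def rung (k : Fin (p + 1)) : Finset (TPV p) :=
  {Sum.inr ⟨2 * k, by omega⟩, Sum.inr ⟨2 * k + 1, by omega⟩}

lemma isNClique_triangle (s : Fin p) : (trianglePath p).IsNClique 3 (triangle s) := by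
  rw [triangle, SimpleGraph.is3Clique_triple_iff]
  exact ⟨adj_inl_inr (Or.inl rfl), adj_inl_inr (Or.inr rfl), adj_inr_inr rfl⟩

lemma isClique_rung (k : Fin (p + 1)) : (trianglePath p).IsClique (rung k : Set (TPV p)) := by
  rw [rung, coe_pair, SimpleGraph.isClique_pair]
  exact fun _ => adj_inr_inr rfl

lemma card_rung (k : Fin (p + 1)) : #(rung k) = 2 :=
  card_pair (by simp [Fin.ext_iff])

lemma pairwiseDisjoint_triangle :
    ((univ : Finset (Fin p)) : Set (Fin p)).PairwiseDisjoint triangle := by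
  intro s _ s' _ hss'
  rw [Function.onFun, disjoint_left]
  intro x hx hx'
  simp only [triangle, mem_insert, mem_singleton] at hx hx'
  rcases hx with rfl | rfl | rfl <;> simp [Fin.ext_iff] at hx' hss' <;> omega

lemma pairwiseDisjoint_rung :
    ((univ : Finset (Fin (p + 1))) : Set (Fin (p + 1))).PairwiseDisjoint rung := by
  intro k _ k' _ hkk'
  rw [Function.onFun, disjoint_left]
  intro x hx hx'
  simp only [rung, mem_insert, mem_singleton] at hx hx'
  rcases hx with rfl | rfl <;> simp [Fin.ext_iff] at hx' hkk' <;> omega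

lemma disjoint_image_inl_rung (k : Fin (p + 1)) :
    Disjoint (univ.image (Sum.inl : Fin p → TPV p)) (rung k) := by
  simp [rung, disjoint_left]

@[simp]
lemma mem_tpCover_inl (t s : Fin p) : Sum.inl s ∈ tpCover p t ↔ s ≠ t := Iff.rfl

@[simp]
lemma mem_tpCover_inr (t : Fin p) (j : Fin (2 * p + 2)) :
    Sum.inr j ∈ tpCover p t ↔ ((j : ℕ) % 2 = 1 ∧ (j : ℕ) ≤ 2 * t + 1) ∨
      ((j : ℕ) % 2 = 0 ∧ 2 * t + 2 ≤ (j : ℕ) ∧ (j : ℕ) ≤ 2 * p) := Iff.rfl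

lemma isVertexCover_tpCover (t : Fin p) : IsVertexCover (trianglePath p) (tpCover p t) := by
  refine isVertexCover_fromRel ?_
  rintro (s | i) (s' | j) h <;> simp only [TPRel] at h
  · rcases eq_or_ne s t with rfl | hst
    · right
      rw [mem_tpCover_inr]
      omega
    · exact Or.inl hst
  · have := j.isLt
    rw [mem_tpCover_inr, mem_tpCover_inr]
    omega

def coverIndex (t : Fin p) (k : Fin (p + 1)) : Fin (2 * p + 2) :=
  ⟨if (k : ℕ) ≤ t then 2 * k + 1 else 2 * k, by split_ifs <;> omega⟩

lemma coverIndex_injective (t : Fin p) : Function.Injective (coverIndex t) := by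
  intro k k' h
  simp only [coverIndex, Fin.ext_iff] at h ⊢
  split_ifs at h <;> omega

lemma tpCover_eq_range (t : Fin p) :
    tpCover p t = Set.range (Sum.map (Subtype.val : {s // s ≠ t} → Fin p) (coverIndex t)) := by
  ext (s | j)
  · simp
  · simp only [Set.mem_range, Sum.exists, Sum.map_inl, Sum.map_inr, reduceCtorEq, exists_false,
      Sum.inr.injEq, false_or, coverIndex, Fin.ext_iff, mem_tpCover_inr]
    constructor
    · intro hj
      refine ⟨⟨j / 2, by omega⟩, ?_⟩
      split_ifs with h <;> dsimp only at h ⊢ <;> omega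
    · rintro ⟨k, hk⟩
      split_ifs at hk <;> omega

lemma ncard_tpCover (t : Fin p) : (tpCover p t).ncard = 2 * p := by
  rw [tpCover_eq_range, Set.ncard_range_of_injective
    (Subtype.val_injective.sumMap (coverIndex_injective t))]
  simp only [Nat.card_eq_fintype_card, Fintype.card_sum, Fintype.card_subtype_compl,
    Fintype.card_fin, Fintype.card_unique]
  have := t.isLt
  omega

end TrianglePath

open TrianglePath

theorem stmt_11_general (p : ℕ) :
    (∀ C : Set (TPV p), IsVertexCover (trianglePath p) C → 2 * p ≤ C.ncard) ∧
    (∀ C : Set (TPV p), IsVertexCover (trianglePath p) C →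
      (∀ s : Fin p, Sum.inl s ∈ C) → 2 * p + 1 ≤ C.ncard) ∧
    (∀ t : Fin p,
      IsVertexCover (trianglePath p) (tpCover p t) ∧ (tpCover p t).ncard = 2 * p) := by
  classical
  refine ⟨fun C hC => ?_, fun C hC hA => ?_, fun t => ⟨isVertexCover_tpCover t, ncard_tpCover t⟩⟩
  · rw [← Set.coe_toFinset C] at hC
    have hcount := hC.card_add_sum_le_card (empty_subset _) (fun s _ => (isNClique_triangle s).isClique)
      pairwiseDisjoint_triangle (fun _ _ => disjoint_empty_left _)
    simp only [(isNClique_triangle _).card_eq, card_empty, sum_const, card_univ,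
      Fintype.card_fin, smul_eq_mul] at hcount
    rw [Set.ncard_eq_toFinset_card']
    omega
  · rw [← Set.coe_toFinset C] at hC
    have hcount := hC.card_add_sum_le_card (by simpa [subset_iff] using hA)
      (fun k _ => isClique_rung k) pairwiseDisjoint_rung fun k _ => disjoint_image_inl_rung k
    simp only [card_rung, card_image_of_injective _ Sum.inl_injective, sum_const, card_univ,
      Fintype.card_fin, smul_eq_mul] at hcount
    rw [Set.ncard_eq_toFinset_card']
    omega

/-- For `p ≥ 1`: (i) every vertex cover of `T_p` has at least `2p`
vertices; (ii) every vertex cover containing all of `a_1, …, a_p` has at least `2p + 1`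
vertices; (iii) for every `s* ∈ [p]` the set `tpCover p s*` is a vertex cover of `T_p`
of size exactly `2p`. -/
theorem stmt_11 (p : ℕ) (hp : 1 ≤ p) :
    (∀ C : Set (TPV p), IsVertexCover (trianglePath p) C → 2 * p ≤ C.ncard) ∧
    (∀ C : Set (TPV p), IsVertexCover (trianglePath p) C →
      (∀ s : Fin p, Sum.inl s ∈ C) → 2 * p + 1 ≤ C.ncard) ∧
    (∀ t : Fin p,
      IsVertexCover (trianglePath p) (tpCover p t) ∧ (tpCover p t).ncard = 2 * p) :=
  stmt_11_general p
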